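/- Let p be an odd prime, ℘ an odd prime distinct from p, m ≥ 1, with p a primitive root modulo 2℘^m. Let q = p^{φ(2℘^m)} and let ξ ∈ 𝔽_q be a primitive 2℘^m-th root of unity. Then for any nonnegative integer j: Tr(ξ^j) = (℘−1)℘^{m−1} if 2℘^m ∣ j; Tr(ξ^j) = −(℘−1)℘^{m−1} if ℘^m ∣ j and j is odd; Tr(ξ^j) = −℘^{m−1} if 2℘^{m−1} ∣ j but ℘^m ∤ j; Tr(ξ^j) = ℘^{m−1} if ℘^{m−1} ∣ j, ℘^m ∤ j and j is odd; and Tr(ξ^j) = 0 otherwise. -/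

import Mathlib

/-!
The trace of `x` is `∑_{i < φ(N)} x ^ p ^ i` with `N = 2℘^m`. Since `p` generates `(ℤ/N)ˣ`, the
exponents `p ^ i mod N` run once through the residues prime to `N`, so `Tr(ξ^j)` is the Ramanujan
sum `∑_{k prime to N} ξ^{jk}`. Inclusion–exclusion over the prime divisors `2` and `℘` of `N` writes
it as `S₁ - S₂ - S_℘ + S_{2℘}`, where `S_d` is the sum over the multiples `k` of `d`, a geometric sum
equal to `N/d` if `N/d ∣ j` and to `0` otherwise; sorting out the divisibility cases gives the result.
-/

open Finset

theorem Nat.coprime_mul_dvd_iff {a b c : ℕ} (hab : a.Coprime b) : a * b ∣ c ↔ a ∣ c ∧ b ∣ c :=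
  ⟨fun h ↦ ⟨dvd_of_mul_right_dvd h, dvd_of_mul_left_dvd h⟩,
    fun h ↦ hab.mul_dvd_of_dvd_of_dvd h.1 h.2⟩

theorem Nat.coprime_two_mul_pow_iff {℘ m k : ℕ} (h℘ : ℘.Prime) (hm : m ≠ 0) :
    (2 * ℘ ^ m).Coprime k ↔ ¬ 2 ∣ k ∧ ¬ ℘ ∣ k := by
  rw [Nat.coprime_mul_iff_left, Nat.coprime_pow_left_iff (Nat.pos_of_ne_zero hm),
    Nat.prime_two.coprime_iff_not_dvd, h℘.coprime_iff_not_dvd]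

theorem injOn_pow_mod_range_orderOf (N a : ℕ) :
    Set.InjOn (fun i ↦ a ^ i % N) (range (orderOf (a : ZMod N)) : Set ℕ) := by
  intro i hi i' hi' h
  refine pow_injOn_Iio_orderOf (x := (a : ZMod N)) (by simpa using hi) (by simpa using hi') ?_
  simpa using (ZMod.natCast_eq_natCast_iff' (a ^ i) (a ^ i') N).mpr h

theorem image_pow_mod_range_totient {N a : ℕ} (hN : 0 < N)
    (hord : orderOf (a : ZMod N) = N.totient) :
    (range N.totient).image (fun i ↦ a ^ i % N) = (range N).filter N.Coprime := by
  have ha : a.Coprime N := by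
    rw [← ZMod.isUnit_iff_coprime]
    exact (orderOf_pos_iff.mp (hord ▸ Nat.totient_pos.mpr hN)).isUnit
  refine eq_of_subset_of_card_le (fun k hk ↦ ?_) ?_
  · obtain ⟨i, -, rfl⟩ := mem_image.mp hk
    refine mem_filter.mpr ⟨mem_range.mpr (Nat.mod_lt _ hN), Nat.coprime_comm.mp ?_⟩
    exact (ZMod.coprime_mod_iff_coprime _ _).mpr (ha.pow_left i)
  · rw [card_image_of_injOn (hord ▸ injOn_pow_mod_range_orderOf N a), card_range]
    rfl

theorem sum_pow_pow_eq_sum_coprime {R : Type*} [Semiring R] {N a : ℕ} (hN : 0 < N)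
    (hord : orderOf (a : ZMod N) = N.totient) {η : R} (hη : η ^ N = 1) :
    ∑ i ∈ range N.totient, η ^ a ^ i = ∑ k ∈ (range N).filter N.Coprime, η ^ k := by
  rw [← image_pow_mod_range_totient hN hord, sum_image (hord ▸ injOn_pow_mod_range_orderOf N a)]
  exact sum_congr rfl fun i _ ↦ pow_eq_pow_mod _ hη

theorem sum_filter_not_dvd_and_not_dvd {M : Type*} [AddCommGroup M] {r s : ℕ}
    (hrs : r.Coprime s) (S : Finset ℕ) (f : ℕ → M) :
    ∑ k ∈ S.filter (fun k ↦ ¬ r ∣ k ∧ ¬ s ∣ k), f k =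
      ∑ k ∈ S, f k - ∑ k ∈ S.filter (r ∣ ·), f k - ∑ k ∈ S.filter (s ∣ ·), f k
        + ∑ k ∈ S.filter (r * s ∣ ·), f k := by
  simp only [sum_filter, ← sum_sub_distrib, ← sum_add_distrib, Nat.coprime_mul_dvd_iff hrs]
  refine sum_congr rfl fun k _ ↦ ?_
  by_cases hr : r ∣ k <;> by_cases hs : s ∣ k <;> simp [hr, hs]

theorem range_mul_filter_dvd {d : ℕ} (hd : 0 < d) (e : ℕ) :
    (range (d * e)).filter (d ∣ ·) = (range e).image (d * ·) := by
  ext k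
  simp only [mem_filter, mem_range, mem_image]
  constructor
  · rintro ⟨hk, t, rfl⟩
    exact ⟨t, Nat.lt_of_mul_lt_mul_left hk, rfl⟩
  · rintro ⟨t, ht, rfl⟩
    exact ⟨Nat.mul_lt_mul_of_pos_left ht hd, dvd_mul_right d t⟩

theorem geom_sum_of_pow_eq_one {K : Type*} [Field K] [DecidableEq K] {x : K} {n : ℕ}
    (hx : x ^ n = 1) : ∑ i ∈ range n, x ^ i = if x = 1 then (n : K) else 0 := by
  split_ifs with h
  · simp [h]
  · rw [geom_sum_eq h, hx, sub_self, zero_div]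

theorem IsPrimitiveRoot.sum_filter_dvd_pow {K : Type*} [Field K] {N d e : ℕ} {ξ : K}
    (hξ : IsPrimitiveRoot ξ N) (hde : d * e = N) (hd : 0 < d) (j : ℕ) :
    ∑ k ∈ (range N).filter (d ∣ ·), (ξ ^ j) ^ k = if e ∣ j then (e : K) else 0 := by
  classical
  subst hde
  have hone : (ξ ^ j) ^ d = 1 ↔ e ∣ j := by
    rw [← pow_mul, hξ.pow_eq_one_iff_dvd, mul_comm j, Nat.mul_dvd_mul_iff_left hd]
  have hpow : ((ξ ^ j) ^ d) ^ e = 1 := by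
    rw [← pow_mul, ← pow_mul, pow_mul', hξ.pow_eq_one, one_pow]
  rw [range_mul_filter_dvd hd, sum_image fun _ _ _ _ h ↦ Nat.eq_of_mul_eq_mul_left hd h]
  simp only [pow_mul]
  rw [geom_sum_of_pow_eq_one hpow]
  exact if_congr hone rfl rfl

theorem ite_two_mul_prime_pow_eq_inclusion_exclusion {R : Type*} [CommRing R] {℘ : ℕ} (h℘ : Odd ℘)
    (m j : ℕ) :
    (if 2 * ℘ ^ (m + 1) ∣ j then (((℘ - 1) * ℘ ^ m : ℕ) : R)
      else if ℘ ^ (m + 1) ∣ j ∧ Odd j then -(((℘ - 1) * ℘ ^ m : ℕ) : R)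
      else if 2 * ℘ ^ m ∣ j ∧ ¬ ℘ ^ (m + 1) ∣ j then -((℘ ^ m : ℕ) : R)
      else if ℘ ^ m ∣ j ∧ ¬ ℘ ^ (m + 1) ∣ j ∧ Odd j then ((℘ ^ m : ℕ) : R)
      else 0) =
      (if 2 * ℘ ^ (m + 1) ∣ j then ((2 * ℘ ^ (m + 1) : ℕ) : R) else 0)
        - (if ℘ ^ (m + 1) ∣ j then ((℘ ^ (m + 1) : ℕ) : R) else 0)
        - (if 2 * ℘ ^ m ∣ j then ((2 * ℘ ^ m : ℕ) : R) else 0)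
        + (if ℘ ^ m ∣ j then ((℘ ^ m : ℕ) : R) else 0) := by
  have h2 : ∀ n, Nat.Coprime 2 (℘ ^ n) := fun n ↦ Nat.coprime_two_left.mpr h℘.pow
  have hsucc : ℘ ^ (m + 1) ∣ j → ℘ ^ m ∣ j := (pow_dvd_pow ℘ m.le_succ).trans
  simp only [Nat.coprime_mul_dvd_iff (h2 _), ← Nat.not_even_iff_odd, even_iff_two_dvd]
  push_cast [Nat.cast_sub (h℘.pos : 1 ≤ ℘)]
  by_cases hA : 2 ∣ j <;> by_cases hB : ℘ ^ (m + 1) ∣ j <;> by_cases hC : ℘ ^ m ∣ j <;>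
    simp [hA, hB, hC] at hsucc ⊢ <;> ring

theorem IsPrimitiveRoot.sum_coprime_pow_eq_inclusion_exclusion {K : Type*} [Field K] {℘ m : ℕ}
    (h℘ : ℘.Prime) (h℘odd : Odd ℘) {ξ : K} (hξ : IsPrimitiveRoot ξ (2 * ℘ ^ (m + 1))) (j : ℕ) :
    ∑ k ∈ (range (2 * ℘ ^ (m + 1))).filter (2 * ℘ ^ (m + 1)).Coprime, (ξ ^ j) ^ k =
      (if 2 * ℘ ^ (m + 1) ∣ j then ((2 * ℘ ^ (m + 1) : ℕ) : K) else 0)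
        - (if ℘ ^ (m + 1) ∣ j then ((℘ ^ (m + 1) : ℕ) : K) else 0)
        - (if 2 * ℘ ^ m ∣ j then ((2 * ℘ ^ m : ℕ) : K) else 0)
        + (if ℘ ^ m ∣ j then ((℘ ^ m : ℕ) : K) else 0) := by
  have hall := hξ.sum_filter_dvd_pow (one_mul _) one_pos j
  rw [filter_true_of_mem fun k _ ↦ one_dvd k] at hall
  simp_rw [Nat.coprime_two_mul_pow_iff h℘ m.succ_ne_zero]
  rw [sum_filter_not_dvd_and_not_dvd (Nat.coprime_two_left.mpr h℘odd), hall,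
    hξ.sum_filter_dvd_pow rfl two_pos, hξ.sum_filter_dvd_pow (e := 2 * ℘ ^ m) (by ring) h℘.pos,
    hξ.sum_filter_dvd_pow (d := 2 * ℘) (e := ℘ ^ m) (by ring) (Nat.mul_pos two_pos h℘.pos)]

theorem stmt_7_general (p ℘ : ℕ) (hp : p.Prime) (h℘ : ℘.Prime) (h℘odd : Odd ℘)
    (m : ℕ) (hm : 1 ≤ m)
    (hprim : orderOf (p : ZMod (2 * ℘ ^ m)) = (2 * ℘ ^ m).totient)
    (F : Type*) [Field F] [Fintype F] [Algebra (ZMod p) F]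
    (hcard : Fintype.card F = p ^ (2 * ℘ ^ m).totient)
    (ξ : F) (hξ : IsPrimitiveRoot ξ (2 * ℘ ^ m)) (j : ℕ) :
    Algebra.trace (ZMod p) F (ξ ^ j) =
      if 2 * ℘ ^ m ∣ j then (((℘ - 1) * ℘ ^ (m - 1) : ℕ) : ZMod p)
      else if ℘ ^ m ∣ j ∧ Odd j then -(((℘ - 1) * ℘ ^ (m - 1) : ℕ) : ZMod p)
      else if 2 * ℘ ^ (m - 1) ∣ j ∧ ¬ ℘ ^ m ∣ j then -((℘ ^ (m - 1) : ℕ) : ZMod p)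
      else if ℘ ^ (m - 1) ∣ j ∧ ¬ ℘ ^ m ∣ j ∧ Odd j then ((℘ ^ (m - 1) : ℕ) : ZMod p)
      else 0 := by
  have : Fact p.Prime := ⟨hp⟩
  obtain ⟨m, rfl⟩ : ∃ m', m = m' + 1 := ⟨m - 1, by omega⟩
  have hfinrank : Module.finrank (ZMod p) F = (2 * ℘ ^ (m + 1)).totient := by
    rw [Module.card_eq_pow_finrank (K := ZMod p), ZMod.card] at hcard
    exact Nat.pow_right_injective hp.two_le hcard
  have hξj : (ξ ^ j) ^ (2 * ℘ ^ (m + 1)) = 1 := by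
    rw [← pow_mul, pow_mul', hξ.pow_eq_one, one_pow]
  apply (algebraMap (ZMod p) F).injective
  rw [FiniteField.algebraMap_trace_eq_sum_pow, Nat.card_zmod, hfinrank,
    sum_pow_pow_eq_sum_coprime (Nat.mul_pos two_pos (pow_pos h℘.pos _)) hprim hξj,
    hξ.sum_coprime_pow_eq_inclusion_exclusion h℘ h℘odd, Nat.add_sub_cancel,
    ← ite_two_mul_prime_pow_eq_inclusion_exclusion h℘odd]
  simp only [apply_ite (algebraMap (ZMod p) F), map_neg, map_natCast, map_zero]

theorem stmt_7 (p ℘ : ℕ) (hp : p.Prime) (h℘ : ℘.Prime) (hpodd : Odd p) (h℘odd : Odd ℘)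
    (hne : p ≠ ℘) (m : ℕ) (hm : 1 ≤ m)
    (hprim : orderOf (p : ZMod (2 * ℘ ^ m)) = (2 * ℘ ^ m).totient)
    (F : Type*) [Field F] [Fintype F] [Algebra (ZMod p) F]
    (hcard : Fintype.card F = p ^ (2 * ℘ ^ m).totient)
    (ξ : F) (hξ : IsPrimitiveRoot ξ (2 * ℘ ^ m)) (j : ℕ) :
    Algebra.trace (ZMod p) F (ξ ^ j) =
      if 2 * ℘ ^ m ∣ j then (((℘ - 1) * ℘ ^ (m - 1) : ℕ) : ZMod p)
      else if ℘ ^ m ∣ j ∧ Odd j then -(((℘ - 1) * ℘ ^ (m - 1) : ℕ) : ZMod p)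
      else if 2 * ℘ ^ (m - 1) ∣ j ∧ ¬ ℘ ^ m ∣ j then -((℘ ^ (m - 1) : ℕ) : ZMod p)
      else if ℘ ^ (m - 1) ∣ j ∧ ¬ ℘ ^ m ∣ j ∧ Odd j then ((℘ ^ (m - 1) : ℕ) : ZMod p)
      else 0 :=
  stmt_7_general p ℘ hp h℘ h℘odd m hm hprim F hcard ξ hξ j
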